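/- Let k ≥ 2 be an integer, let c_i = k^{i−1} for 1 ≤ i ≤ k−1 and c_k = −∑_{i=1}^{k−1} k^{i−1}, let p be a prime with p > (k+1)·k^{k−1}, set q_i = (p + c_i)/(kp) for 1 ≤ i ≤ k, and let H be the additive submonoid of ℚ_{≥0} generated by q_1, …, q_k. Then the set of atoms of H is exactly {q_1, …, q_k}; moreover, if l_1, …, l_k are nonnegative integers with ∑_{i=1}^k l_i·q_i = 1, then l_1 = … = l_k = 1. In particular, the element 1 ∈ H has the unique factorization q_1 + … + q_k, and its set of lengths in H is {k}. -/

import Mathlib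

/-!
Put `B = k ^ (k - 1)`. Every offset satisfies `|c i| < B`, so every generator lies in
`[(p - B) / (k p), (p + B) / (k p)]`, which is contained in `[a, 2a)` for `a = (p - B) / (k p)`
because `p > 3B`. Then a nonzero element of `H` is at least `a`. So no generator is a sum of two
nonzero elements, and all the generators are atoms. If `∑ lᵢ qᵢ = 1`, the same bounds together with
`p > (k + 1) B` force `∑ lᵢ = k`, hence `∑ lᵢ cᵢ = 0`, i.e.
`∑_{i < k-1} lᵢ kⁱ = l_{k-1} ∑_{i < k-1} kⁱ`; by uniqueness of base-`k` digits every `lᵢ`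
equals `l_{k-1}`, and `∑ lᵢ = k` gives `lᵢ = 1`.
-/

/-- `u` is an atom of the additive submonoid `H` of `ℚ`: it is a nonzero element of `H`
that is not the sum of two nonzero elements of `H`. -/
def IsAtomOf (H : AddSubmonoid ℚ) (u : ℚ) : Prop :=
  u ∈ H ∧ u ≠ 0 ∧ ∀ v ∈ H, ∀ w ∈ H, v ≠ 0 → w ≠ 0 → u ≠ v + w

/-- `z` is a factorization of `a` in `H`: a multiset of atoms of `H` with sum `a`. -/
def IsFactorizationOf (H : AddSubmonoid ℚ) (a : ℚ) (z : Multiset ℚ) : Prop :=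
  (∀ x ∈ z, IsAtomOf H x) ∧ z.sum = a

open Finset

lemma mem_of_isAtomOf_closure {S : Set ℚ} {u : ℚ}
    (hu : IsAtomOf (AddSubmonoid.closure S) u) : u ∈ S := by
  obtain ⟨huS, hu0, hirr⟩ := hu
  have trichotomy : ∀ x ∈ AddSubmonoid.closure S, x = 0 ∨ x ∈ S ∨
      ∃ v ∈ AddSubmonoid.closure S, ∃ w ∈ AddSubmonoid.closure S, v ≠ 0 ∧ w ≠ 0 ∧ x = v + w := by
    intro x hx
    induction hx using AddSubmonoid.closure_induction with
    | mem x hx => exact .inr (.inl hx)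
    | zero => exact .inl rfl
    | add x y hx hy ihx ihy =>
      by_cases hx0 : x = 0
      · simpa [hx0] using ihy
      by_cases hy0 : y = 0
      · simpa [hy0] using ihx
      exact .inr (.inr ⟨x, hx, y, hy, hx0, hy0, rfl⟩)
  rcases trichotomy u huS with rfl | hu | ⟨v, hv, w, hw, hv0, hw0, rfl⟩
  · exact absurd rfl hu0
  · exact hu
  · exact absurd rfl (hirr v hv w hw hv0 hw0)

lemma le_of_mem_closure_of_ne_zero {M : Type*} [AddCommMonoid M] [PartialOrder M]
    [IsOrderedAddMonoid M] {S : Set M} {a x : M} (ha : 0 ≤ a) (hS : ∀ s ∈ S, a ≤ s)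
    (hx : x ∈ AddSubmonoid.closure S) (hx0 : x ≠ 0) : a ≤ x := by
  suffices x = 0 ∨ a ≤ x from this.resolve_left hx0
  clear hx0
  induction hx using AddSubmonoid.closure_induction with
  | mem x hx => exact .inr (hS x hx)
  | zero => exact .inl rfl
  | add x y _ _ ihx ihy =>
    rcases ihx with rfl | hx
    · simpa using ihy
    rcases ihy with rfl | hy
    · simp [hx]
    exact .inr (le_add_of_le_of_nonneg hx (ha.trans hy))

lemma isAtomOf_closure_of_subset_Ico {S : Set ℚ} {a u : ℚ} (ha : 0 < a)
    (hS : S ⊆ Set.Ico a (2 * a)) (hu : u ∈ S) : IsAtomOf (AddSubmonoid.closure S) u := by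
  have hlo : ∀ s ∈ S, a ≤ s := fun s hs => (hS hs).1
  refine ⟨AddSubmonoid.subset_closure hu, (ha.trans_le (hlo u hu)).ne', ?_⟩
  rintro v hv w hw hv0 hw0 rfl
  have := (hS hu).2
  linarith [le_of_mem_closure_of_ne_zero ha.le hlo hv hv0,
    le_of_mem_closure_of_ne_zero ha.le hlo hw hw0]

lemma setOf_isAtomOf_closure_eq {S : Set ℚ} {a : ℚ} (ha : 0 < a) (hS : S ⊆ Set.Ico a (2 * a)) :
    {u | IsAtomOf (AddSubmonoid.closure S) u} = S :=
  Set.ext fun _ => ⟨mem_of_isAtomOf_closure, isAtomOf_closure_of_subset_Ico ha hS⟩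

lemma Multiset.exists_map_eq_of_forall_mem_range {α β : Type*} {f : α → β} {s : Multiset β}
    (h : ∀ x ∈ s, x ∈ Set.range f) : ∃ t : Multiset α, t.map f = s := by
  choose g hg using h
  exact ⟨s.attach.map fun x => g x.1 x.2, by simp [hg]⟩

lemma Multiset.sum_map_eq_sum_count {ι M : Type*} [Fintype ι] [DecidableEq ι] [AddCommMonoid M]
    (q : ι → M) (w : Multiset ι) : (w.map q).sum = ∑ i, w.count i • q i := by
  rw [Finset.sum_multiset_map_count]
  refine Finset.sum_subset (Finset.subset_univ _) fun i _ hi => ?_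
  simp [Multiset.count_eq_zero.mpr (by simpa using hi)]

lemma isFactorizationOf_iff_eq_map_univ {ι : Type*} [Fintype ι] [DecidableEq ι]
    {H : AddSubmonoid ℚ} {q : ι → ℚ} {a : ℚ} (hatoms : {u | IsAtomOf H u} = Set.range q)
    (hsum : ∑ i, q i = a) (huniq : ∀ l : ι → ℕ, ∑ i, (l i : ℚ) * q i = a → ∀ i, l i = 1)
    (z : Multiset ℚ) : IsFactorizationOf H a z ↔ z = Multiset.map q Finset.univ.val := by
  have hatom : ∀ u, IsAtomOf H u ↔ u ∈ Set.range q := fun u => Set.ext_iff.mp hatoms u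
  constructor
  · rintro ⟨hz, hza⟩
    obtain ⟨w, rfl⟩ := Multiset.exists_map_eq_of_forall_mem_range fun x hx => (hatom x).mp (hz x hx)
    simp only [Multiset.sum_map_eq_sum_count, nsmul_eq_mul] at hza
    congr
    ext i
    rw [huniq _ hza i, Multiset.count_univ]
  · rintro rfl
    refine ⟨fun x hx => (hatom x).mpr ?_, hsum⟩
    obtain ⟨i, -, rfl⟩ := Multiset.mem_map.mp hx
    exact Set.mem_range_self i

lemma eq_zero_of_sum_mul_pow_eq_zero {b : ℤ} :
    ∀ {n : ℕ} (d : Fin n → ℤ), (∀ i, |d i| < b) → ∑ i, d i * b ^ (i : ℕ) = 0 → ∀ i, d i = 0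
  | 0, _, _, _ => fun i => i.elim0
  | n + 1, d, hd, h => by
    have hb : 0 < b := (abs_nonneg _).trans_lt (hd 0)
    have htail : ∑ i : Fin n, d i.succ * b ^ ((i.succ : Fin (n + 1)) : ℕ) =
        b * ∑ i : Fin n, d i.succ * b ^ (i : ℕ) := by
      rw [mul_sum]
      exact sum_congr rfl fun i _ => by rw [Fin.val_succ, pow_succ]; ring
    rw [Fin.sum_univ_succ, htail, Fin.val_zero, pow_zero, mul_one] at h
    have h0 : d 0 = 0 :=
      Int.eq_zero_of_abs_lt_dvd ⟨-∑ i : Fin n, d i.succ * b ^ (i : ℕ), by linarith⟩ (hd 0)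
    rw [h0, zero_add, mul_eq_zero, or_iff_right hb.ne'] at h
    exact Fin.cases h0 (eq_zero_of_sum_mul_pow_eq_zero _ (fun i => hd i.succ) h)

-- The paper's `c_{i+1}`: indices start at `0` here.
def digitOffset (k : ℕ) (i : Fin k) : ℤ :=
  if (i : ℕ) + 1 < k then (k : ℤ) ^ (i : ℕ) else -(∑ j ∈ Finset.range (k - 1), (k : ℤ) ^ j)

lemma digitOffset_castSucc (n : ℕ) (i : Fin n) :
    digitOffset (n + 1) i.castSucc = ((n : ℤ) + 1) ^ (i : ℕ) := by
  simp [digitOffset]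

lemma digitOffset_last (n : ℕ) :
    digitOffset (n + 1) (Fin.last n) = -∑ i : Fin n, ((n : ℤ) + 1) ^ (i : ℕ) := by
  simp [digitOffset, Fin.sum_univ_eq_sum_range]

lemma sum_digitOffset (k : ℕ) : ∑ i, digitOffset k i = 0 := by
  cases k with
  | zero => simp
  | succ n => simp [Fin.sum_univ_castSucc, digitOffset_castSucc, digitOffset_last]

lemma abs_digitOffset_lt {k : ℕ} (hk : 2 ≤ k) (i : Fin k) :
    |digitOffset k i| < (k : ℤ) ^ (k - 1) := by
  obtain ⟨n, rfl⟩ : ∃ n, k = n + 1 := ⟨k - 1, by omega⟩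
  induction i using Fin.lastCases with
  | last =>
    rw [digitOffset_last, abs_neg, abs_of_nonneg (by positivity), Nat.add_sub_cancel,
      Fin.sum_univ_eq_sum_range (fun j => ((n : ℤ) + 1) ^ j)]
    exact_mod_cast Nat.geomSum_lt hk (s := range n) (by simp)
  | cast i =>
    rw [digitOffset_castSucc, abs_of_nonneg (by positivity)]
    push_cast
    exact pow_lt_pow_right₀ (by omega) (by simp)

lemma eq_one_of_sum_mul_digitOffset_eq_zero {k : ℕ} (l : Fin k → ℕ) (hl : ∑ i, l i = k)
    (h : ∑ i, (l i : ℤ) * digitOffset k i = 0) : ∀ i, l i = 1 := by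
  rcases k with _ | n
  · exact fun i => i.elim0
  rw [Fin.sum_univ_castSucc] at hl h
  simp only [digitOffset_castSucc, digitOffset_last] at h
  set t := l (Fin.last n)
  have hle : ∀ i : Fin n, l i.castSucc ≤ n + 1 - t := fun i => by
    have := single_le_sum (fun j _ => Nat.zero_le (l (Fin.castSucc j))) (mem_univ i)
    omega
  -- `h` compares two base-`(n + 1)` expansions, with digits `l i.castSucc` and the constant `t`;
  -- they are valid digits once the extreme cases `t = 0` and `t = n + 1` are ruled out.
  have hdigits : ∀ i : Fin n, l i.castSucc = t := by
    intro i
    have ht0 : t ≠ 0 := by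
      intro ht
      simp only [ht, Nat.cast_zero, zero_mul, add_zero] at h
      have hz : ∀ j : Fin n, l j.castSucc = 0 := fun j => by
        have := (sum_eq_zero_iff_of_nonneg (fun j _ => by positivity)).mp h j (mem_univ j)
        exact_mod_cast (mul_eq_zero.mp this).resolve_right (by positivity)
      simp [hz, ht] at hl
    have htk : t ≠ n + 1 := by
      intro ht
      have hz : ∀ j : Fin n, l j.castSucc = 0 := fun j => by have := hle j; omega
      simp only [hz, CharP.cast_eq_zero, zero_mul, sum_const_zero, ht, Nat.cast_add, Nat.cast_one,
        mul_neg, zero_add, neg_eq_zero, mul_eq_zero] at h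
      rcases h with h | h
      · omega
      · exact (sum_pos (fun j _ => by positivity) ⟨i, mem_univ i⟩).ne' h
    have hsum : ∑ j : Fin n, ((l j.castSucc : ℤ) - t) * ((n : ℤ) + 1) ^ (j : ℕ) = 0 := by
      rw [← h]
      simp only [sub_mul, sum_sub_distrib, ← mul_sum]
      ring
    have := eq_zero_of_sum_mul_pow_eq_zero _ (fun j => by
      have := hle j
      exact abs_lt.mpr ⟨by omega, by omega⟩) hsum i
    omega
  have ht : t = 1 := by
    rw [sum_congr rfl fun i _ => hdigits i, sum_const, card_univ, Fintype.card_fin,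
      smul_eq_mul] at hl
    nlinarith
  exact fun i => Fin.lastCases ht (fun j => (hdigits j).trans ht) i

lemma eq_of_mul_sub_le_of_le_mul_add {L k : ℕ} {B p : ℚ} (hB : 0 ≤ B) (hp : (k + 1) * B < p)
    (hlo : L * (p - B) ≤ k * p) (hhi : k * p ≤ L * (p + B)) : L = k := by
  have hBp : B < p := by nlinarith
  rcases lt_trichotomy L k with h | h | h
  · have hLk : (L : ℚ) + 1 ≤ k := by exact_mod_cast h
    nlinarith [mul_le_mul_of_nonneg_right hLk (by linarith : 0 ≤ p + B)]
  · exact h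
  · have hkL : (k : ℚ) + 1 ≤ L := by exact_mod_cast h
    nlinarith [mul_le_mul_of_nonneg_right hkL (by linarith : 0 ≤ p - B)]

def digitGen (k : ℕ) (p : ℚ) (i : Fin k) : ℚ := (p + digitOffset k i) / (k * p)

lemma sum_mul_digitGen (k : ℕ) (p : ℚ) (l : Fin k → ℕ) :
    ∑ i, (l i : ℚ) * digitGen k p i =
      (((∑ i, l i : ℕ) : ℚ) * p + ((∑ i, (l i : ℤ) * digitOffset k i : ℤ) : ℚ)) / (k * p) := by
  simp only [digitGen, mul_div_assoc', ← sum_div, Nat.cast_sum, Int.cast_sum, Int.cast_mul,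
    Int.cast_natCast, sum_mul, ← sum_add_distrib, mul_add]

lemma sum_digitGen {k : ℕ} {p : ℚ} (hk : k ≠ 0) (hp : p ≠ 0) : ∑ i, digitGen k p i = 1 := by
  simpa [sum_digitOffset, hk, hp] using sum_mul_digitGen k p 1

lemma digitGen_mem_Icc {k : ℕ} (hk : 2 ≤ k) {p : ℚ} (hp : 0 < p) (i : Fin k) :
    digitGen k p i ∈ Set.Icc ((p - k ^ (k - 1)) / (k * p)) ((p + k ^ (k - 1)) / (k * p)) := by
  have hc : |(digitOffset k i : ℚ)| < (k : ℚ) ^ (k - 1) := by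
    exact_mod_cast abs_digitOffset_lt hk i
  obtain ⟨hlo, hhi⟩ := abs_le.mp hc.le
  constructor <;> apply div_le_div_of_nonneg_right _ (by positivity) <;> linarith

lemma eq_one_of_sum_mul_digitGen_eq_one {k : ℕ} (hk : 2 ≤ k) {p : ℚ}
    (hpk : ((k : ℚ) + 1) * (k : ℚ) ^ (k - 1) < p) (l : Fin k → ℕ)
    (h : ∑ i, (l i : ℚ) * digitGen k p i = 1) : ∀ i, l i = 1 := by
  have hp : 0 < p := lt_of_le_of_lt (by positivity) hpk
  have hkp : (0 : ℚ) < k * p := by positivity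
  set B : ℚ := (k : ℚ) ^ (k - 1)
  have hlo : ((∑ i, l i : ℕ) : ℚ) * ((p - B) / (k * p)) ≤ 1 := by
    rw [← h, Nat.cast_sum, sum_mul]
    gcongr with i
    exact (digitGen_mem_Icc hk hp i).1
  have hhi : 1 ≤ ((∑ i, l i : ℕ) : ℚ) * ((p + B) / (k * p)) := by
    rw [← h, Nat.cast_sum, sum_mul]
    gcongr with i
    exact (digitGen_mem_Icc hk hp i).2
  rw [mul_div_assoc', div_le_one hkp] at hlo
  rw [mul_div_assoc', one_le_div hkp] at hhi
  have hL : ∑ i, l i = k := eq_of_mul_sub_le_of_le_mul_add (by positivity) hpk hlo hhi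
  rw [sum_mul_digitGen, hL, div_eq_one_iff_eq hkp.ne', mul_comm, add_eq_left] at h
  exact eq_one_of_sum_mul_digitOffset_eq_zero l hL (by exact_mod_cast h)

lemma setOf_isAtomOf_closure_range_digitGen {k : ℕ} (hk : 2 ≤ k) {p : ℚ}
    (hpk : ((k : ℚ) + 1) * (k : ℚ) ^ (k - 1) < p) :
    {u | IsAtomOf (AddSubmonoid.closure (Set.range (digitGen k p))) u} =
      Set.range (digitGen k p) := by
  have hp : 0 < p := lt_of_le_of_lt (by positivity) hpk
  have hB : 3 * (k : ℚ) ^ (k - 1) ≤ ((k : ℚ) + 1) * (k : ℚ) ^ (k - 1) := by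
    have : (3 : ℚ) ≤ k + 1 := by exact_mod_cast (by omega : 3 ≤ k + 1)
    gcongr
  refine setOf_isAtomOf_closure_eq (a := (p - k ^ (k - 1)) / (k * p)) ?_ ?_
  · apply div_pos (by linarith) (by positivity)
  · rintro _ ⟨i, rfl⟩
    obtain ⟨hlo, hhi⟩ := digitGen_mem_Icc hk hp i
    refine ⟨hlo, hhi.trans_lt ?_⟩
    rw [← mul_div_assoc]
    gcongr
    linarith

theorem stmt7_general (k : ℕ) (hk : 2 ≤ k) (p : ℕ)
    (hpk : ((k : ℤ) + 1) * (k : ℤ) ^ (k - 1) < (p : ℤ))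
    (c : Fin k → ℤ)
    (hc : ∀ i : Fin k, c i =
      if (i : ℕ) + 1 < k then (k : ℤ) ^ (i : ℕ)
      else -(∑ j ∈ Finset.range (k - 1), (k : ℤ) ^ j))
    (q : Fin k → ℚ) (hq : ∀ i, q i = ((p : ℚ) + (c i : ℚ)) / ((k : ℚ) * (p : ℚ)))
    (H : AddSubmonoid ℚ) (hH : H = AddSubmonoid.closure (Set.range q)) :
    ({u | IsAtomOf H u} = Set.range q) ∧
    (∀ l : Fin k → ℕ, (∑ i, (l i : ℚ) * q i) = 1 → ∀ i, l i = 1) ∧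
    (∀ z, IsFactorizationOf H 1 z ↔ z = Multiset.map q Finset.univ.val) ∧
    ({n | ∃ z, IsFactorizationOf H 1 z ∧ Multiset.card z = n} = {k}) := by
  obtain rfl : c = digitOffset k := funext hc
  obtain rfl : q = digitGen k p := funext hq
  subst hH
  have hpk' : ((k : ℚ) + 1) * (k : ℚ) ^ (k - 1) < p := by exact_mod_cast hpk
  have hp : (p : ℚ) ≠ 0 := (lt_of_le_of_lt (by positivity) hpk').ne'
  have hatoms := setOf_isAtomOf_closure_range_digitGen hk hpk'
  have huniq := eq_one_of_sum_mul_digitGen_eq_one hk hpk'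
  have hfact := isFactorizationOf_iff_eq_map_univ hatoms (sum_digitGen (by omega) hp) huniq
  refine ⟨hatoms, huniq, hfact, ?_⟩
  ext n
  simp [hfact, eq_comm]

/-- With `k ≥ 2`, the explicit integers `c i = k^i` (for `i + 1 < k`,
indexing from `0`) and `c (k-1) = -∑_{j<k-1} k^j`, a prime `p > (k+1)·k^(k-1)`,
`q i = (p + c i)/(k·p)`, and `H` the additive submonoid of `ℚ_{≥0}` generated by the
`q i`: the atoms of `H` are exactly the `q i`; any nonnegative integers `l i` with
`∑ l i · q i = 1` satisfy `l i = 1` for all `i`; `1` has the unique factorization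
`q 1 + … + q k` in `H`; and the set of lengths of `1` in `H` is `{k}`. -/
theorem stmt7 (k : ℕ) (hk : 2 ≤ k) (p : ℕ) (hp : p.Prime)
    (hpk : ((k : ℤ) + 1) * (k : ℤ) ^ (k - 1) < (p : ℤ))
    (c : Fin k → ℤ)
    (hc : ∀ i : Fin k, c i =
      if (i : ℕ) + 1 < k then (k : ℤ) ^ (i : ℕ)
      else -(∑ j ∈ Finset.range (k - 1), (k : ℤ) ^ j))
    (q : Fin k → ℚ) (hq : ∀ i, q i = ((p : ℚ) + (c i : ℚ)) / ((k : ℚ) * (p : ℚ)))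
    (H : AddSubmonoid ℚ) (hH : H = AddSubmonoid.closure (Set.range q)) :
    ({u | IsAtomOf H u} = Set.range q) ∧
    (∀ l : Fin k → ℕ, (∑ i, (l i : ℚ) * q i) = 1 → ∀ i, l i = 1) ∧
    (∀ z, IsFactorizationOf H 1 z ↔ z = Multiset.map q Finset.univ.val) ∧
    ({n | ∃ z, IsFactorizationOf H 1 z ∧ Multiset.card z = n} = {k}) :=
  stmt7_general k hk p hpk c hc q hq H hH
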